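/- Let σ and τ be permutations of a finite type, where σ has cycle type Multiset.replicate s 2 (a product of s pairwise disjoint transpositions) and τ has cycle type {c} with c ≥ 2 (a single c-cycle). Suppose the norms are additive: N(στ) = s + (c−1). Let t be the number of points a with σ a ≠ a, τ a ≠ a, and σ a = the other endpoint of a's transposition lying outside the support of τ — equivalently, t is the number of transpositions of σ whose support meets the support of τ, which equals the cardinality of (support σ ∩ support τ). Then the cycle type of στ is Multiset.replicate (s−t) 2 + {c+t}: the product consists of s−t disjoint transpositions, one cycle of length c+t, and fixed points. -/

import Mathlib

/-!
Write `σ = σ₀ * σ₁`, where `σ₀` collects the transpositions of `σ` that miss `supp τ` and `σ₁`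
the remaining `k₁` ones, each of which meets `supp τ`, so `k₁ ≤ |supp σ₁ ∩ supp τ|`.
Since `N(π) = |supp π| - #cycles(π)`, additivity gives `N(σ₁ τ) = k₁ + c - 1`, while `σ₁ τ`
is supported on `supp σ₁ ∪ supp τ`, a set of size `2 k₁ + c - |supp σ₁ ∩ supp τ| ≤ k₁ + c`.
So `σ₁ τ` is a single cycle filling that set, and `t = |supp σ₁ ∩ supp τ| = k₁`.
-/

/-- The norm of a permutation: the sum over its cycle type of (cycle length − 1). -/
def permNorm {α : Type*} [Fintype α] [DecidableEq α] (σ : Equiv.Perm α) : ℕ :=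
  (σ.cycleType.map (· - 1)).sum

open Equiv Perm Finset

section

variable {α : Type*} [Fintype α] [DecidableEq α]

theorem permNorm_add_card_cycleType (π : Perm α) :
    permNorm π + Multiset.card π.cycleType = #π.support := by
  have hle : ∀ n ∈ π.cycleType, 1 ≤ n := fun n hn => (one_lt_of_mem_cycleType hn).le
  have hcard := Multiset.card_nsmul_le_sum hle
  rw [permNorm, Multiset.sum_map_tsub _ hle, Multiset.map_id', Multiset.map_const',
    Multiset.sum_replicate, ← sum_cycleType]
  simp only [smul_eq_mul, mul_one] at hcard ⊢
  omega

theorem permNorm_mul_of_disjoint {σ τ : Perm α} (h : Disjoint σ τ) :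
    permNorm (σ * τ) = permNorm σ + permNorm τ := by
  rw [permNorm, h.cycleType_mul, Multiset.map_add, Multiset.sum_add, permNorm, permNorm]

theorem permNorm_of_cycleType_eq_replicate_two {σ : Perm α} {k : ℕ}
    (h : σ.cycleType = Multiset.replicate k 2) : permNorm σ = k := by
  simp [permNorm, h]

theorem cycleType_eq_singleton_of_card_le_permNorm_add_one {π : Perm α} {A : Finset α}
    (hA : π.support ⊆ A) (h2 : 2 ≤ #A) (hN : #A ≤ permNorm π + 1) :
    π.cycleType = {#A} := by
  have hcard := permNorm_add_card_cycleType π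
  have hsupp_le := card_le_card hA
  have hπ : π ≠ 1 := by
    rintro rfl
    simp only [permNorm, cycleType_one, Multiset.map_zero, Multiset.sum_zero] at hN
    omega
  have hone : Multiset.card π.cycleType = 1 := by
    have := card_cycleType_pos.mpr hπ
    omega
  obtain ⟨n, hn⟩ := Multiset.card_eq_one.mp hone
  have hsupp : #π.support = #A := by omega
  rw [hn, ← hsupp, ← sum_cycleType, hn, Multiset.sum_singleton]

theorem exists_mul_eq_disjoint_card_cycleType_le (σ τ : Perm α) :
    ∃ σ₀ σ₁ : Perm α, σ₀ * σ₁ = σ ∧ Disjoint σ₀ σ₁ ∧ Disjoint σ₀ τ ∧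
      Multiset.card σ₁.cycleType ≤ #(σ₁.support ∩ τ.support) := by
  induction σ using cycle_induction_on with
  | base_one => exact ⟨1, 1, by simp, disjoint_one_left 1, disjoint_one_left τ, by simp⟩
  | base_cycles g hg =>
    by_cases hgτ : Disjoint g τ
    · exact ⟨g, 1, mul_one g, disjoint_one_right g, hgτ, by simp⟩
    · refine ⟨1, g, one_mul g, disjoint_one_left g, disjoint_one_left τ, ?_⟩
      rw [hg.cycleType, Multiset.card_singleton, Nat.one_le_iff_ne_zero, Ne, card_eq_zero,
        ← disjoint_iff_inter_eq_empty, ← disjoint_iff_disjoint_support]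
      exact hgτ
  | induction_disjoint g h hgh _ ihg ihh =>
    obtain ⟨g₀, g₁, rfl, hg01, hg0τ, hg₁⟩ := ihg
    obtain ⟨h₀, h₁, rfl, hh01, hh0τ, hh₁⟩ := ihh
    have hsub_g₀ : g₀.support ≤ (g₀ * g₁).support := hg01.support_mul ▸ subset_union_left
    have hsub_g₁ : g₁.support ≤ (g₀ * g₁).support := hg01.support_mul ▸ subset_union_right
    have hsub_h₀ : h₀.support ≤ (h₀ * h₁).support := hh01.support_mul ▸ subset_union_left
    have hsub_h₁ : h₁.support ≤ (h₀ * h₁).support := hh01.support_mul ▸ subset_union_right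
    have hg₁h₀ : Disjoint g₁ h₀ := hgh.mono hsub_g₁ hsub_h₀
    have hg₁h₁ : Disjoint g₁ h₁ := hgh.mono hsub_g₁ hsub_h₁
    refine ⟨g₀ * h₀, g₁ * h₁, ?_, ?_, hg0τ.mul_left hh0τ, ?_⟩
    · rw [mul_assoc, ← mul_assoc h₀, ← hg₁h₀.commute.eq]
      simp only [mul_assoc]
    · exact (hg01.mul_right (hgh.mono hsub_g₀ hsub_h₁)).mul_left
        (hg₁h₀.symm.mul_right hh01)
    · rw [hg₁h₁.cycleType_mul, Multiset.card_add, hg₁h₁.support_mul, union_inter_distrib_right,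
        card_union_of_disjoint]
      · omega
      · exact (disjoint_iff_disjoint_support.mp hg₁h₁).mono inter_subset_left inter_subset_left

end

/-- If `σ` is a product of `s` disjoint transpositions, `τ` a single `c`-cycle
(`c ≥ 2`), the norms are additive (`N(στ) = s + (c−1)`), and `t` is the number of
transpositions of `σ` meeting the support of `τ` (i.e. `t = |support σ ∩ support τ|`),
then the cycle type of `στ` is `(2^{s−t}, c+t)`. -/
theorem geodesic_pair_cycleType {α : Type*} [Fintype α] [DecidableEq α]
    (σ τ : Equiv.Perm α) (s c t : ℕ) (hc : 2 ≤ c)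
    (hσ : σ.cycleType = Multiset.replicate s 2) (hτ : τ.cycleType = {c})
    (hadd : permNorm (σ * τ) = s + (c - 1))
    (ht : t = (σ.support ∩ τ.support).card) :
    (σ * τ).cycleType = Multiset.replicate (s - t) 2 + {c + t} := by
  obtain ⟨σ₀, σ₁, rfl, h01, h0τ, hcount⟩ := exists_mul_eq_disjoint_card_cycleType_le σ τ
  have hsplit : σ₀.cycleType + σ₁.cycleType = Multiset.replicate s 2 := h01.cycleType_mul ▸ hσ
  obtain ⟨k₀, -, hk₀⟩ := Multiset.le_replicate_iff.mp (hsplit ▸ Multiset.le_add_right _ _)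
  obtain ⟨k₁, -, hk₁⟩ := Multiset.le_replicate_iff.mp (hsplit ▸ Multiset.le_add_left _ _)
  have hs : k₀ + k₁ = s := by simpa [hk₀, hk₁] using congrArg Multiset.card hsplit
  have hd : Disjoint σ₀ (σ₁ * τ) := h01.mul_right h0τ
  have hN : permNorm (σ₁ * τ) = k₁ + c - 1 := by
    rw [mul_assoc, permNorm_mul_of_disjoint hd, permNorm_of_cycleType_eq_replicate_two hk₀] at hadd
    omega
  have hcτ : #τ.support = c := by rw [← sum_cycleType, hτ, Multiset.sum_singleton]
  have hA : #(σ₁.support ∪ τ.support) + #(σ₁.support ∩ τ.support) = 2 * k₁ + c := by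
    rw [card_union_add_card_inter, ← sum_cycleType, hk₁, hcτ]
    simp [mul_comm]
  have hk₁le : k₁ ≤ #(σ₁.support ∩ τ.support) := by simpa [hk₁] using hcount
  have hcyc : (σ₁ * τ).cycleType = {#(σ₁.support ∪ τ.support)} :=
    cycleType_eq_singleton_of_card_le_permNorm_add_one (support_mul_le σ₁ τ)
      (hc.trans (hcτ ▸ card_le_card subset_union_right)) (by omega)
  have hNA : permNorm (σ₁ * τ) = #(σ₁.support ∪ τ.support) - 1 := by simp [permNorm, hcyc]
  have ht₁ : t = #(σ₁.support ∩ τ.support) := by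
    rw [ht, h01.support_mul, union_inter_distrib_right,
      disjoint_iff_inter_eq_empty.mp (disjoint_iff_disjoint_support.mp h0τ), empty_union]
  rw [mul_assoc, hd.cycleType_mul, hk₀, hcyc]
  congr 2 <;> omega
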